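/- Assume the stability condition. On the countable state space of finite lists of customer types, define the Markov transition kernel K: from w, with probability α_c = λ_c/(λ̄+μ̄) append a customer of type c at the end; with probability β_s = μ_s/(λ̄+μ̄) remove the first entry of w compatible with server type s if such an entry exists, and otherwise leave w unchanged. Then the probability measure π obtained by normalizing π₀(c^1,…,c^L) = ∏_{ℓ=1}^{L} λ_{c^ℓ}/μ_{S({c^1,…,c^ℓ})} is a stationary distribution of K, i.e. Σ_{w'} π(w')·K(w', w) = π(w) for every list w. -/

import Mathlib

open Finset

/-- Sum of service rates over a finite set of server types. -/
def muS {S : Type*} (mu : S → ℝ) (B : Finset S) : ℝ := ∑ s ∈ B, mu s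

/-- The set of server types compatible with at least one customer type in the list `w`. -/
def SsetL {C S : Type*} [Fintype S] (R : C → S → Prop) [∀ c s, Decidable (R c s)]
    (w : List C) : Finset S := Finset.univ.filter fun s => ∃ c ∈ w, R c s

/-- The set of server types compatible with at least one customer type in `A`. -/
def SsetF {C S : Type*} [Fintype S] (R : C → S → Prop) [∀ c s, Decidable (R c s)]
    (A : Finset C) : Finset S := Finset.univ.filter fun s => ∃ c ∈ A, R c s

/-- The unnormalized stationary weight
`qweight R lam mu [] (c^1,…,c^L) = ∏_{ℓ=1}^{L} λ_{c^ℓ}/μ_{S({c^1,…,c^ℓ})}`. -/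
noncomputable def qweight {C S : Type*} [Fintype S]
    (R : C → S → Prop) [∀ c s, Decidable (R c s)]
    (lam : C → ℝ) (mu : S → ℝ) : List C → List C → ℝ
  | _, [] => 1
  | pre, c :: w =>
      (lam c / muS mu (SsetL R (pre ++ [c]))) * qweight R lam mu (pre ++ [c]) w

/-- Remove from a list of customer types the first entry compatible with server type `s`
(if any). -/
def removeFirst {C S : Type*} (R : C → S → Prop) [∀ c s, Decidable (R c s)]
    (s : S) : List C → List C
  | [] => []
  | c :: w => if R c s then w else c :: removeFirst R s w

/-- The transition kernel of the FCFS infinite directed matching chain `X^{↓∞}`: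
with probability `α_c = λ_c/(λ̄+μ̄)` append a customer of type `c`; with probability
`β_s = μ_s/(λ̄+μ̄)` remove the first entry compatible with `s` (no change if none). -/
noncomputable def kernelK {C S : Type*} [Fintype C] [Fintype S] [DecidableEq C]
    (R : C → S → Prop) [∀ c s, Decidable (R c s)]
    (lam : C → ℝ) (mu : S → ℝ) (w w' : List C) : ℝ :=
  (∑ c : C, if w' = w ++ [c]
      then lam c / ((∑ c' : C, lam c') + (∑ s' : S, mu s')) else 0) +
  (∑ s : S, if w' = removeFirst R s w
      then mu s / ((∑ c' : C, lam c') + (∑ s' : S, mu s')) else 0)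

/-!
Write `q = qweight R lam mu []`. The balance equation is checked directly: the flow into a
queue `w` is `q(w) (λ̄ + μ̄)`, up to the common factor `1 / (λ̄ + μ̄)`. It comes from three kinds
of states: from `v` with `w = v a` by an arrival, contributing `λ_a q(v) = q(w) μ_{S(w)}`;
from `w` itself by a service that finds no compatible customer, contributing
`q(w) (μ̄ - μ_{S(w)})`; and from `w` with a customer `c` inserted at a position `k` before
every entry compatible with the server, contributing
`q(w_{<k} c w_{≥k}) (μ_{S(w_{<k} c)} - μ_{S(w_{<k})})`. For fixed `c` this last sum over `k`
equals `λ_c q(w)`: appending an entry `a` to `v` multiplies the terms with `k ≤ |v|` by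
`λ_a / μ_{S(v a c)}` and adds the term `k = |v| + 1`.
-/

theorem List.insertIdx_append_singleton {α : Type*} (x a : α) :
    ∀ (v : List α) (k : ℕ), k ≤ v.length → (v ++ [a]).insertIdx k x = v.insertIdx k x ++ [a]
  | _, 0, _ => by simp
  | [], _ + 1, hk => by simp at hk
  | b :: v, k + 1, hk => by
    simp [List.insertIdx_succ_cons, List.insertIdx_append_singleton x a v k (by simpa using hk)]

section Compatibility

variable {C S : Type*} [Fintype S] (R : C → S → Prop) [∀ c s, Decidable (R c s)]

theorem mem_SsetL {s : S} {l : List C} : s ∈ SsetL R l ↔ ∃ c ∈ l, R c s := by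
  simp [SsetL]

theorem SsetL_congr {l₁ l₂ : List C} (h : ∀ x, x ∈ l₁ ↔ x ∈ l₂) : SsetL R l₁ = SsetL R l₂ := by
  simp only [SsetL, h]

theorem SsetL_nil : SsetL R ([] : List C) = ∅ := by
  ext s; simp [mem_SsetL]

theorem muS_SsetL_pos {mu : S → ℝ} (hmu : ∀ s, 0 < mu s)
    (hScne : ∀ c : C, (univ.filter fun s => R c s).Nonempty) {l : List C} (hl : l ≠ []) :
    0 < muS mu (SsetL R l) := by
  obtain ⟨c, hc⟩ := List.exists_mem_of_ne_nil l hl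
  obtain ⟨s, hs⟩ := hScne c
  exact sum_pos (fun s _ => hmu s) ⟨s, (mem_SsetL R).2 ⟨c, hc, (mem_filter.1 hs).2⟩⟩

theorem sum_ite_forall_not_compatible (mu : S → ℝ) (l : List C) :
    ∑ s, (if ∀ a ∈ l, ¬ R a s then mu s else 0) = ∑ s, mu s - muS mu (SsetL R l) := by
  classical
  rw [← sum_filter, muS, ← sum_sdiff_eq_sub (subset_univ _)]
  congr 1
  ext s; simp [mem_SsetL]

theorem sum_ite_newly_compatible (mu : S → ℝ) (l : List C) (c : C) :
    ∑ s, (if R c s ∧ ∀ a ∈ l, ¬ R a s then mu s else 0) =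
      muS mu (SsetL R (l ++ [c])) - muS mu (SsetL R l) := by
  classical
  have hsub : SsetL R l ⊆ SsetL R (l ++ [c]) := fun s hs => by
    obtain ⟨a, ha, hR⟩ := (mem_SsetL R).1 hs
    exact (mem_SsetL R).2 ⟨a, List.mem_append_left _ ha, hR⟩
  rw [← sum_filter, muS, muS, ← sum_sdiff_eq_sub hsub]
  congr 1
  ext s; simp only [mem_filter, mem_univ, true_and, mem_sdiff, mem_SsetL, List.mem_append,
    List.mem_singleton]
  constructor
  · rintro ⟨hc, hl⟩
    exact ⟨⟨c, Or.inr rfl, hc⟩, fun ⟨a, ha, hR⟩ => hl a ha hR⟩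
  · rintro ⟨⟨a, ha | rfl, hR⟩, hl⟩
    · exact absurd ⟨a, ha, hR⟩ hl
    · exact ⟨hR, fun b hb hRb => hl ⟨b, hb, hRb⟩⟩

end Compatibility

section Weights

variable {C S : Type*} [Fintype S] (R : C → S → Prop) [∀ c s, Decidable (R c s)]
  (lam : C → ℝ) (mu : S → ℝ)

theorem qweight_append_singleton (pre w : List C) (c : C) :
    qweight R lam mu pre (w ++ [c]) =
      qweight R lam mu pre w * (lam c / muS mu (SsetL R (pre ++ w ++ [c]))) := by
  induction w generalizing pre with
  | nil => simp [qweight]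
  | cons a w ih =>
    rw [List.cons_append, qweight, qweight, ih (pre ++ [a])]
    simp only [List.append_assoc, List.cons_append, List.nil_append]
    ring

theorem qweight_nil_append_singleton (w : List C) (c : C) :
    qweight R lam mu [] (w ++ [c]) =
      qweight R lam mu [] w * (lam c / muS mu (SsetL R (w ++ [c]))) := by
  simpa using qweight_append_singleton R lam mu [] w c

theorem sum_qweight_insertIdx (hS : ∀ l : List C, l ≠ [] → muS mu (SsetL R l) ≠ 0)
    (c : C) (w : List C) :
    ∑ k ∈ range (w.length + 1), qweight R lam mu [] (w.insertIdx k c) *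
        (muS mu (SsetL R (w.take k ++ [c])) - muS mu (SsetL R (w.take k))) =
      lam c * qweight R lam mu [] w := by
  induction w using List.reverseRecOn with
  | nil =>
    have := hS [c] (List.cons_ne_nil _ _)
    simp only [List.length_nil, zero_add, sum_range_one, List.insertIdx_zero, List.take_nil,
      List.nil_append, SsetL_nil, qweight]
    simp only [muS, sum_empty, sub_zero] at this ⊢
    field_simp
  | append_singleton v a ih =>
    have hw := hS (v ++ [a]) (by simp)
    have hwc := hS (v ++ [a] ++ [c]) (by simp)
    have hshift : ∀ k ∈ range (v.length + 1),
        qweight R lam mu [] ((v ++ [a]).insertIdx k c) *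
            (muS mu (SsetL R ((v ++ [a]).take k ++ [c])) - muS mu (SsetL R ((v ++ [a]).take k))) =
          lam a / muS mu (SsetL R (v ++ [a] ++ [c])) *
            (qweight R lam mu [] (v.insertIdx k c) *
              (muS mu (SsetL R (v.take k ++ [c])) - muS mu (SsetL R (v.take k)))) := by
      intro k hk
      have hk : k ≤ v.length := Nat.lt_succ_iff.1 (mem_range.1 hk)
      rw [List.insertIdx_append_singleton c a v k hk, List.take_append_of_le_length hk,
        qweight_nil_append_singleton,
        SsetL_congr R (l₂ := v ++ [a] ++ [c]) (fun x => by simp [List.mem_insertIdx hk]; tauto)]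
      ring
    rw [List.length_append, List.length_singleton, sum_range_succ, sum_congr rfl hshift,
      ← mul_sum, ih, show v.length + 1 = (v ++ [a]).length by simp, List.insertIdx_length_self,
      List.take_length,
      qweight_nil_append_singleton R lam mu (v ++ [a]) c, qweight_nil_append_singleton]
    field_simp
    ring

end Weights

theorem summable_of_length_le {C M : Type*} [Finite C] [AddCommMonoid M] [TopologicalSpace M]
    {f : List C → M} (n : ℕ)
    (hf : ∀ u, f u ≠ 0 → u.length ≤ n) : Summable f :=
  summable_of_hasFiniteSupport ((List.finite_length_le C n).subset hf)

section RemoveFirst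

variable {C S : Type*} (R : C → S → Prop) {s : S}

theorem insertIdx_ne_insertIdx_of_lt {w : List C} {k k' : ℕ} {c c' : C} (hlt : k < k')
    (hk' : k' ≤ w.length) (hc : R c s) (hfree : ∀ a ∈ w.take k', ¬ R a s) :
    w.insertIdx k c ≠ w.insertIdx k' c' := by
  intro h
  have hk : w[k]? = some c := by
    have := congrArg (·[k]?) h
    rwa [List.getElem?_insertIdx_self, if_pos (by omega), List.getElem?_insertIdx_of_lt hlt,
      eq_comm] at this
  exact hfree c (List.mem_of_getElem? (by rwa [List.getElem?_take_of_lt hlt])) hc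

theorem insertIdx_inj_of_compatible {w : List C} {k k' : ℕ} {c c' : C}
    (hk : k ≤ w.length) (hk' : k' ≤ w.length) (hc : R c s) (hc' : R c' s)
    (hfree : ∀ a ∈ w.take k, ¬ R a s) (hfree' : ∀ a ∈ w.take k', ¬ R a s)
    (h : w.insertIdx k c = w.insertIdx k' c') : k = k' ∧ c = c' := by
  rcases lt_trichotomy k k' with hlt | rfl | hlt
  · exact absurd h (insertIdx_ne_insertIdx_of_lt R hlt hk' hc hfree')
  · have := congrArg (·[k]?) h
    simp only [List.getElem?_insertIdx_self, if_pos hk, Option.some.injEq] at this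
    exact ⟨rfl, this⟩
  · exact absurd h.symm (insertIdx_ne_insertIdx_of_lt R hlt hk hc' hfree)

variable [∀ c s, Decidable (R c s)]

theorem length_le_length_removeFirst_add_one (u : List C) :
    u.length ≤ (removeFirst R s u).length + 1 := by
  induction u with
  | nil => simp
  | cons a u ih => by_cases h : R a s <;> simp [removeFirst, h, ih]

theorem removeFirst_eq_self {w : List C} (h : ∀ a ∈ w, ¬ R a s) : removeFirst R s w = w := by
  induction w with
  | nil => rfl
  | cons a w ih =>
    rw [removeFirst, if_neg (h a List.mem_cons_self),
      ih fun b hb => h b (List.mem_cons_of_mem _ hb)]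

theorem removeFirst_insertIdx {c : C} (hc : R c s) :
    ∀ (w : List C) (k : ℕ), k ≤ w.length → (∀ a ∈ w.take k, ¬ R a s) →
      removeFirst R s (w.insertIdx k c) = w
  | w, 0, _, _ => by rw [List.insertIdx_zero, removeFirst, if_pos hc]
  | [], _ + 1, hk, _ => by simp at hk
  | a :: w, k + 1, hk, hfree => by
    rw [List.insertIdx_succ_cons, removeFirst, if_neg (hfree a (by simp)),
      removeFirst_insertIdx hc w k (by simpa using hk) fun b hb => hfree b (by simp [hb])]

theorem eq_or_exists_insertIdx_of_removeFirst_eq : ∀ {u w : List C}, removeFirst R s u = w →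
    (u = w ∧ ∀ a ∈ w, ¬ R a s) ∨
      ∃ k ≤ w.length, ∃ c, R c s ∧ (∀ a ∈ w.take k, ¬ R a s) ∧ u = w.insertIdx k c
  | [], _, h => by subst h; exact Or.inl ⟨rfl, by simp [removeFirst]⟩
  | b :: u, w, h => by
    by_cases hb : R b s
    · rw [removeFirst, if_pos hb] at h
      exact Or.inr ⟨0, Nat.zero_le _, b, hb, by simp, by simp [h]⟩
    · rw [removeFirst, if_neg hb] at h
      subst h
      rcases eq_or_exists_insertIdx_of_removeFirst_eq (u := u) rfl with
        ⟨hu, hfree⟩ | ⟨k, hk, c, hc, hfree, hu⟩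
      · exact Or.inl ⟨by rw [← hu], List.forall_mem_cons.2 ⟨hb, hfree⟩⟩
      · refine Or.inr ⟨k + 1, by simpa using hk, c, hc, ?_, by rw [List.insertIdx_succ_cons, ← hu]⟩
        simpa [List.take_succ_cons, hb] using hfree

variable [Fintype C] [DecidableEq C]

theorem tsum_ite_removeFirst_eq {M : Type*} [AddCommMonoid M] [TopologicalSpace M]
    (g : List C → M) (s : S) (w : List C) :
    ∑' u, (if w = removeFirst R s u then g u else 0) =
      (if ∀ a ∈ w, ¬ R a s then g w else 0) +
        ∑ p : C × Fin (w.length + 1),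
          if R p.1 s ∧ ∀ a ∈ w.take p.2, ¬ R a s then g (w.insertIdx p.2 p.1) else 0 := by
  set f : Option (C × Fin (w.length + 1)) → M := fun x => x.elim
    (if ∀ a ∈ w, ¬ R a s then g w else 0)
    fun p => if R p.1 s ∧ ∀ a ∈ w.take p.2, ¬ R a s then g (w.insertIdx p.2 p.1) else 0
  suffices h : ∑' u, (if w = removeFirst R s u then g u else 0) = ∑' x, f x by
    rw [h, tsum_fintype, Fintype.sum_option]
    rfl
  have hcond : ∀ p : C × Fin (w.length + 1), f (some p) ≠ 0 →
      R p.1 s ∧ ∀ a ∈ w.take p.2, ¬ R a s := fun p hp => (ite_ne_right_iff.1 hp).1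
  refine tsum_eq_tsum_of_ne_zero_bij (fun x => x.1.elim w fun p => w.insertIdx p.2 p.1)
    ?inj ?surj ?eq
  case inj =>
    rintro ⟨_ | ⟨c, k⟩, hx⟩ ⟨_ | ⟨c', k'⟩, hy⟩ h
    · rfl
    · simpa [List.length_insertIdx_of_le_length (Nat.lt_succ_iff.1 k'.2)]
        using congrArg List.length h
    · simpa [List.length_insertIdx_of_le_length (Nat.lt_succ_iff.1 k.2)]
        using congrArg List.length h
    · obtain ⟨hc, hfree⟩ := hcond _ hx
      obtain ⟨hc', hfree'⟩ := hcond _ hy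
      obtain ⟨hk, rfl⟩ := insertIdx_inj_of_compatible R (Nat.lt_succ_iff.1 k.2)
        (Nat.lt_succ_iff.1 k'.2) hc hc' hfree hfree' h
      simp [Fin.ext hk]
  case surj =>
    intro u hu
    obtain ⟨hw, hgu⟩ := ite_ne_right_iff.1 (Function.mem_support.1 hu)
    rcases eq_or_exists_insertIdx_of_removeFirst_eq R hw.symm with
      ⟨rfl, hfree⟩ | ⟨k, hk, c, hc, hfree, rfl⟩
    · refine ⟨⟨none, Function.mem_support.2 ?_⟩, rfl⟩
      simpa only [f, Option.elim, if_pos hfree] using hgu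
    · refine ⟨⟨some (c, ⟨k, Nat.lt_succ_iff.2 hk⟩), Function.mem_support.2 ?_⟩, rfl⟩
      simpa only [f, Option.elim, if_pos (And.intro hc hfree)] using hgu
  case eq =>
    rintro ⟨_ | p, hx⟩
    · have hfree : ∀ a ∈ w, ¬ R a s := (ite_ne_right_iff.1 hx).1
      simp only [f, Option.elim, removeFirst_eq_self R hfree, if_pos hfree, eq_self, if_true]
    · obtain ⟨hc, hfree⟩ := hcond _ hx
      simp only [f, Option.elim, removeFirst_insertIdx R hc w p.2 (Nat.lt_succ_iff.1 p.2.2) hfree,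
        if_pos (And.intro hc hfree), eq_self, if_true]

end RemoveFirst

section Balance

variable {C S : Type*} [Fintype C] [Fintype S] [DecidableEq C]
  (R : C → S → Prop) [∀ c s, Decidable (R c s)] (lam : C → ℝ) (mu : S → ℝ)

theorem tsum_arrival_flow (hS : ∀ l : List C, l ≠ [] → muS mu (SsetL R l) ≠ 0) (w : List C) :
    ∑ c, ∑' u, (if w = u ++ [c] then qweight R lam mu [] u * lam c else 0) =
      qweight R lam mu [] w * muS mu (SsetL R w) := by
  rcases List.eq_nil_or_concat' w with rfl | ⟨v, a, rfl⟩
  · simp [SsetL_nil, muS]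
  · have hcases : ∀ (c : C) (u : List C), v ++ [a] = u ++ [c] ↔ u = v ∧ c = a := by
      simp [eq_comm]
    simp only [hcases, ite_and, tsum_ite_eq, sum_ite_eq', mem_univ, if_true,
      qweight_nil_append_singleton]
    field_simp [hS (v ++ [a]) (by simp)]

theorem tsum_departure_flow (hS : ∀ l : List C, l ≠ [] → muS mu (SsetL R l) ≠ 0) (w : List C) :
    ∑ s, ∑' u, (if w = removeFirst R s u then qweight R lam mu [] u * mu s else 0) =
      qweight R lam mu [] w * (∑ s, mu s - muS mu (SsetL R w)) +
        (∑ c, lam c) * qweight R lam mu [] w := by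
  have hstay : ∑ s, (if ∀ a ∈ w, ¬ R a s then qweight R lam mu [] w * mu s else 0) =
      qweight R lam mu [] w * (∑ s, mu s - muS mu (SsetL R w)) := by
    rw [← sum_ite_forall_not_compatible, mul_sum]
    simp only [mul_ite, mul_zero]
  have hinsert : ∀ (c : C) (k : ℕ), ∑ s, (if R c s ∧ ∀ a ∈ w.take k, ¬ R a s
      then qweight R lam mu [] (w.insertIdx k c) * mu s else 0) =
        qweight R lam mu [] (w.insertIdx k c) *
          (muS mu (SsetL R (w.take k ++ [c])) - muS mu (SsetL R (w.take k))) := by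
    intro c k
    rw [← sum_ite_newly_compatible, mul_sum]
    simp only [mul_ite, mul_zero]
  simp only [tsum_ite_removeFirst_eq, sum_add_distrib]
  rw [hstay, sum_comm, Fintype.sum_prod_type, sum_mul]
  simp only [hinsert]
  congr 1
  refine sum_congr rfl fun c _ => ?_
  rw [Fin.sum_univ_eq_sum_range (fun k => qweight R lam mu [] (w.insertIdx k c) *
      (muS mu (SsetL R (w.take k ++ [c])) - muS mu (SsetL R (w.take k)))),
    sum_qweight_insertIdx R lam mu hS, mul_comm]

theorem kernelK_eq (u w : List C) :
    kernelK R lam mu u w = ((∑ c, if w = u ++ [c] then lam c else 0) +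
      ∑ s, if w = removeFirst R s u then mu s else 0) / (∑ c, lam c + ∑ s, mu s) := by
  simp only [kernelK, add_div, sum_div, ite_div, zero_div]

theorem tsum_qweight_mul_kernelK (hS : ∀ l : List C, l ≠ [] → muS mu (SsetL R l) ≠ 0)
    (hD : ∑ c, lam c + ∑ s, mu s ≠ 0) (w : List C) :
    ∑' u, qweight R lam mu [] u * kernelK R lam mu u w = qweight R lam mu [] w := by
  have harrival : ∀ c, Summable fun u =>
      if w = u ++ [c] then qweight R lam mu [] u * lam c else 0 := fun c =>
    summable_of_length_le w.length fun u hu => by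
      simp [(ite_ne_right_iff.1 hu).1]
  have hdeparture : ∀ s, Summable fun u =>
      if w = removeFirst R s u then qweight R lam mu [] u * mu s else 0 := fun s =>
    summable_of_length_le (w.length + 1) fun u hu =>
      (ite_ne_right_iff.1 hu).1 ▸ length_le_length_removeFirst_add_one R u
  simp only [kernelK_eq, ← mul_div_assoc, mul_add, mul_sum, mul_ite, mul_zero]
  rw [tsum_div_const, (summable_sum fun c _ => harrival c).tsum_add
      (summable_sum fun s _ => hdeparture s), Summable.tsum_finsetSum fun c _ => harrival c,
    Summable.tsum_finsetSum fun s _ => hdeparture s, tsum_arrival_flow R lam mu hS,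
    tsum_departure_flow R lam mu hS]
  field_simp
  ring

end Balance

theorem stmt6_general {C S : Type*} [Fintype C] [Fintype S] [Nonempty C]
    [DecidableEq C]
    (R : C → S → Prop) [∀ c s, Decidable (R c s)]
    (lam : C → ℝ) (mu : S → ℝ)
    (hlam : ∀ c, 0 < lam c) (hmu : ∀ s, 0 < mu s)
    (hScne : ∀ c : C, (Finset.univ.filter fun s => R c s).Nonempty) :
    ∀ w : List C,
      (∑' w' : List C,
          (qweight R lam mu [] w' / (∑' u : List C, qweight R lam mu [] u)) *
            kernelK (S := S) R lam mu w' w)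
        = qweight R lam mu [] w / (∑' u : List C, qweight R lam mu [] u) := by
  intro w
  have hD : ∑ c, lam c + ∑ s, mu s ≠ 0 :=
    (add_pos_of_pos_of_nonneg (sum_pos (fun c _ => hlam c) univ_nonempty)
      (sum_nonneg fun s _ => (hmu s).le)).ne'
  simp only [div_mul_eq_mul_div, tsum_div_const]
  rw [tsum_qweight_mul_kernelK R lam mu (fun l hl => (muS_SsetL_pos R hmu hScne hl).ne') hD]

/-- under the stability condition, the normalization of
`π₀(c^1,…,c^L) = ∏_{ℓ=1}^{L} λ_{c^ℓ}/μ_{S({c^1,…,c^ℓ})}` is a stationary distribution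
of the kernel `K` of the FCFS infinite directed matching chain:
`Σ_{w'} π(w')·K(w', w) = π(w)` for every list `w`. -/
theorem stmt6 {C S : Type*} [Fintype C] [Fintype S] [Nonempty C] [Nonempty S]
    [DecidableEq C]
    (R : C → S → Prop) [∀ c s, Decidable (R c s)]
    (lam : C → ℝ) (mu : S → ℝ)
    (hlam : ∀ c, 0 < lam c) (hmu : ∀ s, 0 < mu s)
    (hScne : ∀ c : C, (Finset.univ.filter fun s => R c s).Nonempty)
    (hstab : ∀ A : Finset C, A.Nonempty → (∑ c ∈ A, lam c) < muS mu (SsetF R A)) :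
    ∀ w : List C,
      (∑' w' : List C,
          (qweight R lam mu [] w' / (∑' u : List C, qweight R lam mu [] u)) *
            kernelK (S := S) R lam mu w' w)
        = qweight R lam mu [] w / (∑' u : List C, qweight R lam mu [] u) :=
  stmt6_general R lam mu hlam hmu hScne
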